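/- A weakly amenable commutative Banach algebra admits no nonzero point derivations: for every character χ : A → ℂ, every bounded linear functional d on A satisfying d(ab) = χ(a)d(b) + d(a)χ(b) is zero. -/
import Mathlib


open ContinuousLinearMap

variable {A : Type*} [NormedCommRing A] [NormedAlgebra ℂ A] [CompleteSpace A]

/-- The left dual-bimodule action: `(a · f) c = f (c * a)`. -/
noncomputable def dualLeftAct (a : A) (f : A →L[ℂ] ℂ) : A →L[ℂ] ℂ :=
  f.comp ((ContinuousLinearMap.mul ℂ A).flip a)

/-- The right dual-bimodule action: `(f · a) c = f (a * c)`. -/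
noncomputable def dualRightAct (f : A →L[ℂ] ℂ) (a : A) : A →L[ℂ] ℂ :=
  f.comp (ContinuousLinearMap.mul ℂ A a)

/-- A commutative Banach algebra `A` is weakly amenable if every bounded derivation
`D : A → A*` into the dual bimodule is inner. -/
def WeaklyAmenable (A : Type*) [NormedCommRing A] [NormedAlgebra ℂ A] [CompleteSpace A] :
    Prop :=
  ∀ D : A →L[ℂ] (A →L[ℂ] ℂ),
    (∀ a b : A, D (a * b) = dualLeftAct a (D b) + dualRightAct (D a) b) →
    ∃ f : A →L[ℂ] ℂ, ∀ a : A, D a = dualLeftAct a f - dualRightAct f a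

/-- A weakly amenable commutative Banach algebra admits no nonzero point derivations:
for every character `χ`, every bounded point derivation `d` at `χ` is zero. -/
theorem pointDerivation_eq_zero_of_weaklyAmenable (hA : WeaklyAmenable A)
    (χ : A →L[ℂ] ℂ) (hχ : χ ≠ 0) (hχm : ∀ a b : A, χ (a * b) = χ a * χ b)
    (d : A →L[ℂ] ℂ) (hd : ∀ a b : A, d (a * b) = χ a * d b + d a * χ b) :
    d = 0 := by
  set D : A →L[ℂ] (A →L[ℂ] ℂ) := d.smulRight χ with hD
  have hder : ∀ a b : A, D (a * b) = dualLeftAct a (D b) + dualRightAct (D a) b := by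
    intro a b
    ext c
    simp [hD, dualLeftAct, dualRightAct, hd a b, hχm]
    ring
  obtain ⟨f, hf⟩ := hA D hder
  have hDzero : ∀ a : A, D a = 0 := by
    intro a
    rw [hf a]
    ext c
    simp [dualLeftAct, dualRightAct, mul_comm]
  obtain ⟨c, hc⟩ : ∃ c, χ c ≠ 0 := by
    by_contra h
    push_neg at h
    exact hχ (by ext x; simp [h x])
  ext a
  have := congrArg (fun g => g c) (hDzero a)
  simp [hD] at this
  rcases this with h | h
  · simpa using h
  · exact absurd h hc
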